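/- In a solid, e(x)·e(y) ≤ e(x·y) for all x, y. -/

import Mathlib

structure Assembly (A : Type*) where
  add : A → A → A
  e : A → A
  neg : A → A
  add_assoc : ∀ x y z, add x (add y z) = add (add x y) z
  add_comm : ∀ x y, add x y = add y x
  add_e : ∀ x, add x (e x) = x
  e_max : ∀ x f, add x f = x → add (e x) f = e x
  add_neg : ∀ x, add x (neg x) = e x
  e_neg : ∀ x, e (neg x) = e x
  e_add : ∀ x y, e (add x y) = e x ∨ e (add x y) = e y

structure OrderedAssembly (A : Type*) extends Assembly A where
  le : A → A → Prop
  le_refl : ∀ x, le x x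
  le_antisymm : ∀ x y, le x y → le y x → x = y
  le_trans : ∀ x y z, le x y → le y z → le x z
  le_total : ∀ x y, le x y ∨ le y x
  add_le_add : ∀ x y z, le x y → le (add x z) (add y z)
  le_e : ∀ x y, add y (e x) = e x → le y (e x) ∧ le (neg y) (e x)

structure Solid (A : Type*) extends OrderedAssembly A where
  mul : A → A → A
  u : A → A
  inv : A → A
  mul_assoc : ∀ x y z, mul x (mul y z) = mul (mul x y) z
  mul_comm : ∀ x y, mul x y = mul y x
  mul_u : ∀ x, x ≠ e x → mul x (u x) = x
  u_max : ∀ x, x ≠ e x → ∀ v, mul x v = x → mul (u x) v = u x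
  mul_inv : ∀ x, x ≠ e x → mul x (inv x) = u x
  u_inv : ∀ x, x ≠ e x → u (inv x) = u x
  u_mul : ∀ x y, x ≠ e x → y ≠ e y →
    u (mul x y) = u x ∨ u (mul x y) = u y
  compat_mul : ∀ x y z, le (e x) x → e x ≠ x → le y z → le (mul x y) (mul x z)
  amplification : ∀ x y z, le (e y) y → le y z → le (mul (e x) y) (mul (e x) z)
  escala : ∀ x y, ∃ z, mul (e x) y = e z
  e_mul : ∀ x y, e (mul x y) = add (mul (e x) y) (mul (e y) x)
  e_u : ∀ x, x ≠ e x → e (u x) = mul (e x) (inv x)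
  dist : ∀ x y z, add (mul x y) (mul x z) =
    add (add (mul x (add y z)) (mul (e x) y)) (mul (e x) z)
  neg_mul : ∀ x y, neg (mul x y) = mul (neg x) y
  zero : A
  add_zero : ∀ x, add x zero = x
  one : A
  one_mul : ∀ x, mul one x = x
  M : A
  e_add_M : ∀ x, add (e x) M = M
  exists_neutrix : ∃ x, e x ≠ zero ∧ e x ≠ M
  decomp : ∀ x, ∃ a, x = add a (e x) ∧ e a = zero
  dense : ∀ x y, x = e x → y = e y → le x y → x ≠ y →
    ∃ z, z ≠ e z ∧ le x z ∧ x ≠ z ∧ le z y ∧ z ≠ y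

/-!
By the Leibniz rule applied to `e(x)·y`, whose magnitude is itself, the product `e(x)·e(y)` is
absorbed by `e(x)·y`, hence by `e(x·y) = e(x)·y + e(y)·x`; an element absorbed by a magnitude
lies below it.
-/

namespace Assembly

variable {A : Type*} (S : Assembly A)

theorem e_e (a : A) : S.e (S.e a) = S.e a := by
  rcases S.e_add a (S.neg a) with h | h <;> simpa only [S.add_neg, S.e_neg] using h

theorem add_add_eq_of_add_eq {a b : A} (h : S.add a b = b) (c : A) :
    S.add a (S.add b c) = S.add b c := by
  rw [S.add_assoc, h]

end Assembly

namespace Solid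

variable {A : Type*} (S : Solid A)

theorem e_e_mul (x y : A) : S.e (S.mul (S.e x) y) = S.mul (S.e x) y := by
  obtain ⟨z, hz⟩ := S.escala x y
  rw [hz, S.e_e]

theorem e_mul_e_add_e_mul (x y : A) :
    S.add (S.mul (S.e x) (S.e y)) (S.mul (S.e x) y) = S.mul (S.e x) y := by
  have leibniz := S.e_mul (S.e x) y
  rw [S.e_e_mul, S.e_e, S.mul_comm (S.e y)] at leibniz
  rw [S.add_comm, ← leibniz]

end Solid

theorem stmt11 {A : Type*} (S : Solid A) (x y : A) :
    S.le (S.mul (S.e x) (S.e y)) (S.e (S.mul x y)) := by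
  have absorbed : S.add (S.mul (S.e x) (S.e y)) (S.e (S.mul x y)) = S.e (S.mul x y) := by
    rw [S.e_mul]
    exact S.add_add_eq_of_add_eq (S.e_mul_e_add_e_mul x y) _
  exact (S.le_e _ _ absorbed).1
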